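/- Every locally finite game is equivalent to some finite game, that is, to a game whose game graph has only finitely many positions. -/

import Mathlib

open scoped Classical

universe u

/-- `PosP Γ n` is the set `Pₙ` of positions from which the second player can win
within `n` rounds: `P₀` is the set of terminal positions, and
`Pₙ₊₁ = {x : every option of x has an option in Pₙ}`. -/
def PosP {V : Type*} (Γ : V → Finset V) : ℕ → Set V
  | 0 => {x | Γ x = ∅}
  | n + 1 => {x | ∀ y ∈ Γ x, ∃ z ∈ Γ y, z ∈ PosP Γ n}

/-- `PosN Γ n` is the set `Nₙ`: for `n ≥ 1`, `Nₙ = {x : some option of x lies in Pₙ₋₁}`. -/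
def PosN {V : Type*} (Γ : V → Finset V) : ℕ → Set V
  | 0 => ∅
  | n + 1 => {x | ∃ y ∈ Γ x, y ∈ PosP Γ n}

/-- The P-positions `𝒫 = ⋃ₙ Pₙ` (second player wins). -/
def PPos {V : Type*} (Γ : V → Finset V) : Set V := ⋃ n, PosP Γ n

/-- The N-positions `𝒩 = ⋃ₙ Nₙ` (first player wins). -/
def NPos {V : Type*} (Γ : V → Finset V) : Set V := ⋃ n, PosN Γ n

/-- The D-positions `𝒟 = V ∖ (𝒫 ∪ 𝒩)` (draws). -/
def DPos {V : Type*} (Γ : V → Finset V) : Set V := (PPos Γ ∪ NPos Γ)ᶜ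

/-- The mex (least natural number not attained) of the values `g y`, `y ∈ s`. -/
noncomputable def mexF {V : Type*} (s : Finset V) (g : V → ℕ∞) : ℕ :=
  sInf {n : ℕ | ∀ y ∈ s, g y ≠ (n : ℕ∞)}

/-- The approximants `𝒢ₙ` of the extended Sprague-Grundy function. -/
noncomputable def Gfun {V : Type*} (Γ : V → Finset V) : ℕ → V → ℕ∞
  | 0 => fun x => if Γ x = ∅ then 0 else ⊤
  | n + 1 => fun x =>
      let m := mexF (Γ x) (Gfun Γ n)
      if ∀ y ∈ Γ x, Gfun Γ n y ≤ (m : ℕ∞) ∨ ∃ z ∈ Γ y, Gfun Γ n z = (m : ℕ∞)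
      then (m : ℕ∞) else ⊤

/-- `x` has finite rank with (finite) Sprague-Grundy value `m`:
`𝒢ₙ(x) = m` for all sufficiently large `n`. -/
def HasGVal {V : Type*} (Γ : V → Finset V) (x : V) (m : ℕ) : Prop :=
  ∃ n₀ : ℕ, ∀ n ≥ n₀, Gfun Γ n x = (m : ℕ∞)

/-- `x` has infinite rank: `𝒢ₙ(x) = ∞` for all `n`. -/
def InfiniteRank {V : Type*} (Γ : V → Finset V) (x : V) : Prop :=
  ∀ n : ℕ, Gfun Γ n x = ⊤

/-- The rank of `x`: the least `n` with `𝒢ₙ(x) < ∞`, or `∞` if there is none. -/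
noncomputable def rank {V : Type*} (Γ : V → Finset V) (x : V) : ℕ∞ :=
  sInf ((↑) '' {n : ℕ | Gfun Γ n x ≠ ⊤})

/-- For `x` of infinite rank, the set `𝒜` with `𝒢(x) = ∞(𝒜)`:
the set of finite Sprague-Grundy values of finite-rank options of `x`. -/
def ValSet {V : Type*} (Γ : V → Finset V) (x : V) : Set ℕ :=
  {a | ∃ y ∈ Γ x, HasGVal Γ y a}

/-- The graph of the disjunctive sum: move in exactly one coordinate. -/
noncomputable def sumGraph {V W : Type*} (Γ : V → Finset V) (Δ : W → Finset W) :
    V × W → Finset (V × W) := fun p =>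
  (Γ p.1).image (fun u => (u, p.2)) ∪ (Δ p.2).image (fun w => (p.1, w))

/-- Two (positions of possibly different) games lie in the same outcome class. -/
def SameOutcome {V W : Type*} (Γ : V → Finset V) (x : V) (Δ : W → Finset W) (y : W) : Prop :=
  (x ∈ PPos Γ ↔ y ∈ PPos Δ) ∧ (x ∈ NPos Γ ↔ y ∈ NPos Δ) ∧ (x ∈ DPos Γ ↔ y ∈ DPos Δ)

/-- Equivalence of games: `G + X` and `H + X` have the same outcome for every
locally finite game `X`. -/
def GameEquiv {V W : Type*} (Γ : V → Finset V) (x : V) (Δ : W → Finset W) (y : W) : Prop :=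
  ∀ (X : Type u) (Ξ : X → Finset X) (z : X),
    SameOutcome (sumGraph Γ Ξ) (x, z) (sumGraph Δ Ξ) (y, z)

/-- The nim heap `*m`: positions `0, …, m`, where from `k` one can move to any `j < k`. -/
def nimGraph (m : ℕ) : Fin (m + 1) → Finset (Fin (m + 1)) :=
  fun k => Finset.univ.filter (fun j => j < k)

/-- The reduced graph `R(V)`: the induced graph on the complement of the P-positions. -/
noncomputable def reducedGraph {V : Type*} (Γ : V → Finset V) :
    {x : V // x ∉ PPos Γ} → Finset {x : V // x ∉ PPos Γ} := fun x =>
  (Γ x.1).subtype (fun y => y ∉ PPos Γ)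

/-- The vertex set of `R^{(k)}(V)`: positions which do not have finite rank with
Sprague-Grundy value `< k`. -/
def RkSet {V : Type*} (Γ : V → Finset V) (k : ℕ) : Set V :=
  {x | ¬ ∃ m < k, HasGVal Γ x m}

/-- The induced game graph `R^{(k)}(V)` on `RkSet Γ k`. -/
noncomputable def RkGraph {V : Type*} (Γ : V → Finset V) (k : ℕ) :
    RkSet Γ k → Finset (RkSet Γ k) := fun x =>
  (Γ x.1).subtype (fun y => y ∈ RkSet Γ k)

/-- `V` is `k`-stable: every infinite-rank position `x`, with `𝒢(x) = ∞(𝒜)`,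
has `{0, 1, …, k} ⊆ 𝒜`. -/
def kStable {V : Type*} (Γ : V → Finset V) (k : ℕ) : Prop :=
  ∀ x, InfiniteRank Γ x → ∀ j ≤ k, j ∈ ValSet Γ x

/-- `l` is a directed walk from `o` to `x` in the graph `Γ`. -/
def IsWalk {V : Type*} (Γ : V → Finset V) (o x : V) (l : List V) : Prop :=
  l.head? = some o ∧ l.getLast? = some x ∧ l.Chain' (fun a b => b ∈ Γ a)

/-- `Γ` is a tree with root `o`: `o` has no incoming arcs, and every vertex is
reached from `o` by a unique directed walk. -/
def IsTree {V : Type*} (Γ : V → Finset V) (o : V) : Prop :=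
  (∀ x, o ∉ Γ x) ∧ ∀ x, ∃! l : List V, IsWalk Γ o x l

/-- `f` is a mex labelling: `f x` is the least natural number not attained by `f`
on the options of `x`, for every `x`. -/
def MexLabelling {V : Type*} (Γ : V → Finset V) (f : V → ℕ) : Prop :=
  ∀ x, f x = sInf {n : ℕ | ∀ y ∈ Γ x, f y ≠ n}

/-!
Smith's extended Sprague–Grundy function gives every position either a finite value `a` or the
value `∞(A)`, where `A` is the finite set of finite values of its options. The finite values add
by xor, so `(x, z)` is a P-position of a sum exactly when `x` and `z` have the same finite value;
hence the outcome of `G + X` depends on `G` only through its value. Every value is realised by a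
finite game: a nim heap `*a`, or a heap `*k` together with a looping position with options `A`.
-/

open Filter

section Mex

variable {V : Type*} {s : Finset V} {g : V → ℕ∞} {y : V} {m : ℕ}

theorem mexF_ne (hy : y ∈ s) : g y ≠ mexF s g := by
  have hne : {n : ℕ | ∀ y ∈ s, g y ≠ n}.Nonempty := by
    refine ⟨(s.sup fun y => (g y).toNat) + 1, fun y hy hgy => ?_⟩
    have := Finset.le_sup (f := fun y => (g y).toNat) hy
    simp only [hgy, ENat.toNat_natCast] at this
    omega
  exact Nat.sInf_mem hne y hy

theorem exists_eq_of_lt_mexF (hm : m < mexF s g) : ∃ y ∈ s, g y = m := by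
  simpa using Nat.notMem_of_lt_sInf hm

theorem exists_lt_of_le_mexF (hy : y ∈ s) (hle : g y ≤ mexF s g) :
    ∃ c < mexF s g, g y = c := by
  obtain ⟨c, hc⟩ := ENat.ne_top_iff_exists.1 (ne_top_of_le_ne_top (ENat.natCast_ne_top _) hle)
  rw [← hc] at hle ⊢
  refine ⟨c, lt_of_le_of_ne (by exact_mod_cast hle) fun h => ?_, rfl⟩
  exact mexF_ne (g := g) hy (by rw [← hc, h])

theorem mexF_eq_of (h₁ : ∀ y ∈ s, g y ≠ m) (h₂ : ∀ c < m, ∃ y ∈ s, g y = c) :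
    mexF s g = m := by
  refine le_antisymm (Nat.sInf_le h₁) (not_lt.1 fun hlt => ?_)
  obtain ⟨y, hy, hgy⟩ := h₂ _ hlt
  exact mexF_ne hy hgy

end Mex

namespace Gfun

variable {V : Type*} {Γ : V → Finset V} {n : ℕ} {x y : V} {a c : ℕ}

theorem zero_eq_coe_iff : Gfun Γ 0 x = a ↔ Γ x = ∅ ∧ a = 0 := by
  by_cases hx : Γ x = ∅ <;> simp [Gfun, hx, eq_comm]

theorem succ_eq_coe_iff :
    Gfun Γ (n + 1) x = a ↔ mexF (Γ x) (Gfun Γ n) = a ∧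
      ∀ y ∈ Γ x, Gfun Γ n y ≤ a ∨ ∃ z ∈ Γ y, Gfun Γ n z = a := by
  simp only [Gfun]
  split_ifs with h
  · constructor
    · intro he
      obtain rfl : mexF (Γ x) (Gfun Γ n) = a := by exact_mod_cast he
      exact ⟨rfl, h⟩
    · rintro ⟨rfl, -⟩
      rfl
  · refine ⟨fun he => absurd he (ENat.top_ne_natCast a), ?_⟩
    rintro ⟨rfl, h'⟩
    exact absurd h' h

theorem succ_of_eq_coe : Gfun Γ n x = a → Gfun Γ (n + 1) x = a := by
  induction n generalizing x a with
  | zero =>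
    rw [zero_eq_coe_iff, succ_eq_coe_iff]
    rintro ⟨hx, rfl⟩
    refine ⟨mexF_eq_of ?_ ?_, ?_⟩ <;> simp [hx]
  | succ n ih =>
    intro h
    obtain ⟨hmex, hopt⟩ := succ_eq_coe_iff.1 h
    have hfin : ∀ y ∈ Γ x, Gfun Γ n y ≤ a → ∃ c < a, Gfun Γ n y = c := fun y hy hle =>
      hmex ▸ exists_lt_of_le_mexF hy (hmex ▸ hle)
    refine succ_eq_coe_iff.2 ⟨mexF_eq_of (fun y hy hya => ?_) fun c hc => ?_, fun y hy => ?_⟩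
    · rcases hopt y hy with hle | ⟨z, hz, hza⟩
      · obtain ⟨c, hca, hc⟩ := hfin y hy hle
        exact hca.ne (by exact_mod_cast (ih hc).symm.trans hya)
      · -- `y` has the option `z` of value `a` at stage `n`, so it lacks value `a` at stage `n + 1`
        exact mexF_ne hz ((succ_eq_coe_iff.1 hya).1 ▸ hza)
    · obtain ⟨y, hy, hyc⟩ := exists_eq_of_lt_mexF (hmex ▸ hc)
      exact ⟨y, hy, ih hyc⟩
    · rcases hopt y hy with hle | ⟨z, hz, hza⟩
      · obtain ⟨c, -, hc⟩ := hfin y hy hle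
        exact Or.inl (ih hc ▸ hc ▸ hle)
      · exact Or.inr ⟨z, hz, ih hza⟩

theorem eq_coe_of_le {m : ℕ} (hnm : n ≤ m) (h : Gfun Γ n x = a) : Gfun Γ m x = a := by
  induction hnm with
  | refl => exact h
  | step _ ih => exact succ_of_eq_coe ih

theorem exists_option_of_eq_coe (h : Gfun Γ n x = a) (hy : y ∈ Γ x) :
    ∃ m < n, (∃ c < a, Gfun Γ m y = c) ∨ ∃ z ∈ Γ y, Gfun Γ m z = a := by
  obtain _ | m := n
  · simp [(zero_eq_coe_iff.1 h).1] at hy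
  obtain ⟨hmex, hopt⟩ := succ_eq_coe_iff.1 h
  exact ⟨m, m.lt_succ_self, (hopt y hy).imp_left fun hle =>
    hmex ▸ exists_lt_of_le_mexF hy (hmex ▸ hle)⟩

theorem exists_option_of_lt (h : Gfun Γ n x = a) (hc : c < a) :
    ∃ m < n, ∃ y ∈ Γ x, Gfun Γ m y = c := by
  obtain _ | m := n
  · exact absurd ((zero_eq_coe_iff.1 h).2 ▸ hc) (Nat.not_lt_zero c)
  obtain ⟨hmex, -⟩ := succ_eq_coe_iff.1 h
  exact ⟨m, m.lt_succ_self, exists_eq_of_lt_mexF (hmex ▸ hc)⟩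

end Gfun

section GrundyValue

variable {V : Type*} {Γ : V → Finset V} {x y : V} {a b c : ℕ}

theorem HasGVal.of_gfun_eq {n : ℕ} (h : Gfun Γ n x = a) : HasGVal Γ x a :=
  ⟨n, fun _ hm => Gfun.eq_coe_of_le hm h⟩

theorem HasGVal.eventually (h : HasGVal Γ x a) : ∀ᶠ n in atTop, Gfun Γ n x = a :=
  eventually_atTop.2 h

theorem HasGVal.unique (ha : HasGVal Γ x a) (hb : HasGVal Γ x b) : a = b := by
  obtain ⟨n, hna, hnb⟩ := (ha.eventually.and hb.eventually).exists
  exact_mod_cast hna.symm.trans hnb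

theorem HasGVal.not_infiniteRank (h : HasGVal Γ x a) : ¬InfiniteRank Γ x := fun hx =>
  let ⟨n, hn⟩ := h.eventually.exists
  ENat.top_ne_natCast a ((hx n).symm.trans hn)

theorem hasGVal_or_infiniteRank (Γ : V → Finset V) (x : V) :
    (∃ a, HasGVal Γ x a) ∨ InfiniteRank Γ x := by
  refine or_iff_not_imp_right.2 fun hx => ?_
  obtain ⟨n, hn⟩ := not_forall.1 hx
  obtain ⟨a, ha⟩ := ENat.ne_top_iff_exists.1 hn
  exact ⟨a, .of_gfun_eq ha.symm⟩

theorem gfun_ne_of_not_hasGVal (h : ¬HasGVal Γ x a) (n : ℕ) : Gfun Γ n x ≠ a :=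
  fun hn => h (.of_gfun_eq hn)

theorem HasGVal.not_hasGVal_of_mem (h : HasGVal Γ x a) (hy : y ∈ Γ x) : ¬HasGVal Γ y a := by
  intro hya
  obtain ⟨n, hxn, hyn⟩ :=
    (((tendsto_add_atTop_nat 1).eventually h.eventually).and hya.eventually).exists
  exact mexF_ne hy ((Gfun.succ_eq_coe_iff.1 hxn).1 ▸ hyn)

theorem HasGVal.exists_mem_of_lt (h : HasGVal Γ x a) (hc : c < a) :
    ∃ y ∈ Γ x, HasGVal Γ y c := by
  obtain ⟨n, hn⟩ := h.eventually.exists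
  obtain ⟨m, -, y, hy, hyc⟩ := Gfun.exists_option_of_lt hn hc
  exact ⟨y, hy, .of_gfun_eq hyc⟩

theorem hasGVal_of_forall_mem
    (h₁ : ∀ y ∈ Γ x, (∃ d ≠ b, HasGVal Γ y d) ∨ ∃ z ∈ Γ y, HasGVal Γ z b)
    (h₂ : ∀ c < b, ∃ y ∈ Γ x, HasGVal Γ y c) : HasGVal Γ x b := by
  have hopt : ∀ y ∈ Γ x, ∀ᶠ n in atTop,
      Gfun Γ n y ≠ b ∧ (Gfun Γ n y ≤ b ∨ ∃ z ∈ Γ y, Gfun Γ n z = b) := by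
    intro y hy
    rcases h₁ y hy with ⟨d, hdb, hd⟩ | ⟨z, hz, hzb⟩
    · rcases hdb.lt_or_gt with hlt | hlt
      · refine hd.eventually.mono fun n hn => ?_
        rw [hn]
        exact ⟨by exact_mod_cast hdb, Or.inl (by exact_mod_cast hlt.le)⟩
      · obtain ⟨z, hz, hzb⟩ := hd.exists_mem_of_lt hlt
        refine (hd.eventually.and hzb.eventually).mono fun n hn => ?_
        rw [hn.1]
        exact ⟨by exact_mod_cast hdb, Or.inr ⟨z, hz, hn.2⟩⟩
    · have hyb : ¬HasGVal Γ y b := fun hyb => hyb.not_hasGVal_of_mem hz hzb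
      exact hzb.eventually.mono fun n hn =>
        ⟨gfun_ne_of_not_hasGVal hyb n, Or.inr ⟨z, hz, hn⟩⟩
  have hlt : ∀ c ∈ Finset.range b, ∀ᶠ n in atTop, ∃ y ∈ Γ x, Gfun Γ n y = c :=
    fun c hc =>
    let ⟨y, hy, hyc⟩ := h₂ c (Finset.mem_range.1 hc)
    hyc.eventually.mono fun _ hn => ⟨y, hy, hn⟩
  obtain ⟨n, hopt, hlt⟩ :=
    (((eventually_all_finset _).2 hopt).and ((eventually_all_finset _).2 hlt)).exists
  refine .of_gfun_eq (n := n + 1) (Gfun.succ_eq_coe_iff.2 ⟨?_, fun y hy => (hopt y hy).2⟩)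
  exact mexF_eq_of (fun y hy => (hopt y hy).1) fun c hc => hlt c (Finset.mem_range.2 hc)

theorem valSet_finite (Γ : V → Finset V) (x : V) : (ValSet Γ x).Finite := by
  have : ValSet Γ x = ⋃ y ∈ Γ x, {a | HasGVal Γ y a} := by ext; simp [ValSet]
  rw [this]
  exact (Γ x).finite_toSet.biUnion fun y _ => Set.Subsingleton.finite fun _ ha _ hb => ha.unique hb

theorem exists_hasGVal_of_forall_mem (h : ∀ y ∈ Γ x, ∃ d, HasGVal Γ y d) :
    ∃ b, HasGVal Γ x b := by
  have hex : ∃ b, b ∉ ValSet Γ x := (valSet_finite Γ x).exists_notMem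
  refine ⟨Nat.find hex, hasGVal_of_forall_mem (fun y hy => ?_) fun c hc => ?_⟩
  · obtain ⟨d, hd⟩ := h y hy
    exact Or.inl ⟨d, fun hdb => Nat.find_spec hex ⟨y, hy, hdb ▸ hd⟩, hd⟩
  · exact not_not.1 (Nat.find_min hex hc)

theorem infiniteRank_of_mem_self (h : x ∈ Γ x) : InfiniteRank Γ x :=
  (hasGVal_or_infiniteRank Γ x).resolve_left fun ⟨_, ha⟩ => ha.not_hasGVal_of_mem h ha

end GrundyValue

section Outcome

variable {V : Type*} {Γ : V → Finset V} {x : V}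

theorem mem_posP_of_gfun_eq_zero {n : ℕ} (h : Gfun Γ n x = (0 : ℕ)) : x ∈ PosP Γ n := by
  induction n generalizing x with
  | zero => exact (Gfun.zero_eq_coe_iff.1 h).1
  | succ n ih =>
    obtain ⟨hmex, hopt⟩ := Gfun.succ_eq_coe_iff.1 h
    intro y hy
    rcases hopt y hy with hle | ⟨z, hz, hz0⟩
    · obtain ⟨c, hc, -⟩ := exists_lt_of_le_mexF hy (hmex ▸ hle)
      exact absurd (hmex ▸ hc) (Nat.not_lt_zero c)
    · exact ⟨z, hz, ih hz0⟩

theorem hasGVal_zero_of_mem_posP {n : ℕ} (h : x ∈ PosP Γ n) : HasGVal Γ x 0 := by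
  induction n generalizing x with
  | zero => exact .of_gfun_eq (n := 0) (Gfun.zero_eq_coe_iff.2 ⟨h, rfl⟩)
  | succ n ih =>
    refine hasGVal_of_forall_mem (fun y hy => ?_) fun c hc => absurd hc (Nat.not_lt_zero c)
    obtain ⟨z, hz, hzP⟩ := h y hy
    exact Or.inr ⟨z, hz, ih hzP⟩

theorem mem_pPos_iff_hasGVal_zero : x ∈ PPos Γ ↔ HasGVal Γ x 0 := by
  refine ⟨fun h => ?_, fun h => ?_⟩
  · obtain ⟨n, hn⟩ := Set.mem_iUnion.1 h
    exact hasGVal_zero_of_mem_posP hn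
  · obtain ⟨n, hn⟩ := h.eventually.exists
    exact Set.mem_iUnion.2 ⟨n, mem_posP_of_gfun_eq_zero hn⟩

theorem mem_nPos_iff : x ∈ NPos Γ ↔ ∃ y ∈ Γ x, y ∈ PPos Γ := by
  simp only [NPos, PPos, Set.mem_iUnion]
  constructor
  · rintro ⟨_ | n, hn⟩
    · exact hn.elim
    · obtain ⟨y, hy, hyP⟩ := hn
      exact ⟨y, hy, n, hyP⟩
  · rintro ⟨y, hy, n, hn⟩
    exact ⟨n + 1, y, hy, hn⟩

end Outcome

section Sum

variable {V W : Type*} {Γ : V → Finset V} {Δ : W → Finset W}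

theorem equiv_apply_mem_posP_iff (e : V ≃ W) (he : ∀ x, Δ (e x) = (Γ x).map e.toEmbedding)
    {n : ℕ} {x : V} : e x ∈ PosP Δ n ↔ x ∈ PosP Γ n := by
  induction n generalizing x with
  | zero => simp [PosP, he]
  | succ n ih =>
    simp only [PosP, Set.mem_ofPred_eq, he, Finset.forall_mem_map]
    refine forall₂_congr fun y _ => ?_
    simp only [Equiv.coe_toEmbedding, he, Finset.mem_map_equiv]
    exact ⟨fun ⟨z, hz, hzP⟩ => ⟨e.symm z, hz, ih.1 (by simpa using hzP)⟩,
      fun ⟨z, hz, hzP⟩ => ⟨e z, by simpa using hz, ih.2 hzP⟩⟩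

theorem mem_sumGraph {u : V} {v : W} {o : V × W} :
    o ∈ sumGraph Γ Δ (u, v) ↔
      (∃ u' ∈ Γ u, o = (u', v)) ∨ ∃ v' ∈ Δ v, o = (u, v') := by
  simp [sumGraph, eq_comm]

theorem mk_mem_sumGraph_left {u u' : V} (h : u' ∈ Γ u) (v : W) :
    (u', v) ∈ sumGraph Γ Δ (u, v) :=
  mem_sumGraph.2 (Or.inl ⟨u', h, rfl⟩)

theorem mk_mem_sumGraph_right {v v' : W} (h : v' ∈ Δ v) (u : V) :
    (u, v') ∈ sumGraph Γ Δ (u, v) :=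
  mem_sumGraph.2 (Or.inr ⟨v', h, rfl⟩)

theorem sumGraph_swap (p : V × W) :
    sumGraph Δ Γ p.swap = (sumGraph Γ Δ p).map (Equiv.prodComm V W).toEmbedding := by
  ext ⟨w, v⟩
  simp [sumGraph, or_comm]

theorem swap_mem_posP_sumGraph_iff {n : ℕ} {p : V × W} :
    p.swap ∈ PosP (sumGraph Δ Γ) n ↔ p ∈ PosP (sumGraph Γ Δ) n :=
  equiv_apply_mem_posP_iff (Equiv.prodComm V W) sumGraph_swap

theorem hasGVal_sumGraph_of_gfun_eq {m n : ℕ} {p : V} {q : W} {a b : ℕ}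
    (hp : Gfun Γ m p = a) (hq : Gfun Δ n q = b) :
    HasGVal (sumGraph Γ Δ) (p, q) (a ^^^ b) := by
  induction hs : m + n using Nat.strong_induction_on generalizing m n p q a b with
  | _ s ih =>
  subst hs
  refine hasGVal_of_forall_mem ?_ fun c hc => ?_
  · intro o ho
    rcases mem_sumGraph.1 ho with ⟨p', hp', rfl⟩ | ⟨q', hq', rfl⟩
    · obtain ⟨m', hm', ⟨c, hca, hc⟩ | ⟨z, hz, hza⟩⟩ :=
        Gfun.exists_option_of_eq_coe hp hp'
      · refine Or.inl ⟨c ^^^ b, fun h => hca.ne (Nat.xor_left_injective h), ?_⟩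
        exact ih _ (by omega) hc hq rfl
      · exact Or.inr ⟨(z, q), mk_mem_sumGraph_left hz q, ih _ (by omega) hza hq rfl⟩
    · obtain ⟨n', hn', ⟨d, hdb, hd⟩ | ⟨z, hz, hzb⟩⟩ :=
        Gfun.exists_option_of_eq_coe hq hq'
      · refine Or.inl ⟨a ^^^ d, fun h => hdb.ne (Nat.xor_right_injective h), ?_⟩
        exact ih _ (by omega) hp hd rfl
      · exact Or.inr ⟨(p, z), mk_mem_sumGraph_right hz p, ih _ (by omega) hp hzb rfl⟩
  · rcases Nat.lt_xor_cases hc with h | h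
    · obtain ⟨m', hm', p', hp', hv⟩ := Gfun.exists_option_of_lt hp h
      refine ⟨(p', q), mk_mem_sumGraph_left hp' q, ?_⟩
      simpa using ih _ (by omega) hv hq rfl
    · obtain ⟨n', hn', q', hq', hv⟩ := Gfun.exists_option_of_lt hq h
      refine ⟨(p, q'), mk_mem_sumGraph_right hq' p, ?_⟩
      simpa [Nat.xor_comm c a] using ih _ (by omega) hp hv rfl

theorem HasGVal.sum {p : V} {q : W} {a b : ℕ} (hp : HasGVal Γ p a) (hq : HasGVal Δ q b) :
    HasGVal (sumGraph Γ Δ) (p, q) (a ^^^ b) :=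
  let ⟨m, hm⟩ := hp
  let ⟨n, hn⟩ := hq
  hasGVal_sumGraph_of_gfun_eq (hm m le_rfl) (hn n le_rfl)

theorem exists_hasGVal_fst_of_mem_posP_sumGraph {k : ℕ} {p : V} {q : W}
    (ih : ∀ r s, (r, s) ∈ PosP (sumGraph Γ Δ) k → ∃ c, HasGVal Γ r c ∧ HasGVal Δ s c)
    (h : (p, q) ∈ PosP (sumGraph Γ Δ) (k + 1)) : ∃ a, HasGVal Γ p a := by
  have hP := hasGVal_zero_of_mem_posP h
  have reply : ∀ o ∈ sumGraph Γ Δ (p, q),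
      ∃ r ∈ sumGraph Γ Δ o, ∃ c, HasGVal Γ r.1 c ∧ HasGVal Δ r.2 c := fun o ho =>
    let ⟨r, hr, hrP⟩ := h o ho
    ⟨r, hr, ih r.1 r.2 hrP⟩
  -- Were `p` of infinite rank, it would have an infinite-rank option `p₀`; the reply to
  -- `(p₀, q)` gives `q` a finite value `b`, and the replies to the other moves then certify
  -- that `p` has value `b`.
  by_contra! hp
  obtain ⟨p₀, hp₀, hp₀'⟩ : ∃ p₀ ∈ Γ p, ∀ d, ¬HasGVal Γ p₀ d := by
    by_contra! H
    obtain ⟨a, ha⟩ := exists_hasGVal_of_forall_mem H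
    exact hp a ha
  obtain ⟨b, hb⟩ : ∃ b, HasGVal Δ q b := by
    obtain ⟨r, hr', c, hr, hs⟩ := reply (p₀, q) (mk_mem_sumGraph_left hp₀ q)
    rcases mem_sumGraph.1 hr' with ⟨_, -, rfl⟩ | ⟨_, -, rfl⟩
    · exact ⟨c, hs⟩
    · exact absurd hr (hp₀' c)
  refine hp b (hasGVal_of_forall_mem (fun p' hp' => ?_) fun c hc => ?_)
  · have ho : (p', q) ∈ sumGraph Γ Δ (p, q) := mk_mem_sumGraph_left hp' q
    obtain ⟨r, hr', d, hr, hs⟩ := reply _ ho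
    rcases mem_sumGraph.1 hr' with ⟨p'', hp'', rfl⟩ | ⟨_, -, rfl⟩
    · exact Or.inr ⟨p'', hp'', hs.unique hb ▸ hr⟩
    · refine Or.inl ⟨d, fun hdb => ?_, hr⟩
      subst hdb
      exact hP.not_hasGVal_of_mem ho (by simpa using hr.sum hb)
  · obtain ⟨q', hq', hc'⟩ := hb.exists_mem_of_lt hc
    obtain ⟨r, hr', d, hr, hs⟩ := reply (p, q') (mk_mem_sumGraph_right hq' p)
    rcases mem_sumGraph.1 hr' with ⟨p', hp', rfl⟩ | ⟨_, -, rfl⟩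
    · exact ⟨p', hp', hs.unique hc' ▸ hr⟩
    · exact absurd hr (hp d)

theorem exists_hasGVal_of_mem_posP_sumGraph {n : ℕ} {p : V} {q : W}
    (h : (p, q) ∈ PosP (sumGraph Γ Δ) n) : ∃ c, HasGVal Γ p c ∧ HasGVal Δ q c := by
  induction n generalizing p q with
  | zero =>
    obtain ⟨hp, hq⟩ : Γ p = ∅ ∧ Δ q = ∅ := by simpa [PosP, sumGraph] using h
    exact ⟨0, .of_gfun_eq (n := 0) (Gfun.zero_eq_coe_iff.2 ⟨hp, rfl⟩),
      .of_gfun_eq (n := 0) (Gfun.zero_eq_coe_iff.2 ⟨hq, rfl⟩)⟩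
  | succ k ih =>
    obtain ⟨a, ha⟩ := exists_hasGVal_fst_of_mem_posP_sumGraph (fun _ _ => ih) h
    obtain ⟨b, hb⟩ := exists_hasGVal_fst_of_mem_posP_sumGraph
      (fun r s hrs => (ih (swap_mem_posP_sumGraph_iff.1 hrs)).imp fun _ => And.symm)
      (swap_mem_posP_sumGraph_iff.2 h)
    obtain rfl : a = b := xor_eq_zero_iff.1 ((ha.sum hb).unique (hasGVal_zero_of_mem_posP h))
    exact ⟨a, ha, hb⟩

end Sum

section Equivalence

variable {V W X : Type*} {Γ : V → Finset V} {Δ : W → Finset W} {Ξ : X → Finset X}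
  {x : V} {y : W} {z : X} {a : ℕ}

theorem mem_pPos_sumGraph_iff :
    (x, z) ∈ PPos (sumGraph Γ Ξ) ↔ ∃ c, HasGVal Γ x c ∧ HasGVal Ξ z c := by
  refine ⟨fun h => ?_, fun ⟨c, hx, hz⟩ => ?_⟩
  · obtain ⟨n, hn⟩ := Set.mem_iUnion.1 h
    exact exists_hasGVal_of_mem_posP_sumGraph hn
  · exact mem_pPos_iff_hasGVal_zero.2 (Nat.xor_self c ▸ hx.sum hz)

theorem mem_nPos_sumGraph_iff : (x, z) ∈ NPos (sumGraph Γ Ξ) ↔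
    (∃ c ∈ ValSet Γ x, HasGVal Ξ z c) ∨ ∃ c, HasGVal Γ x c ∧ c ∈ ValSet Ξ z := by
  simp only [mem_nPos_iff, mem_sumGraph, ValSet]
  constructor
  · rintro ⟨o, ⟨x', hx', rfl⟩ | ⟨z', hz', rfl⟩, ho⟩ <;>
      obtain ⟨c, h₁, h₂⟩ := mem_pPos_sumGraph_iff.1 ho
    · exact Or.inl ⟨c, ⟨x', hx', h₁⟩, h₂⟩
    · exact Or.inr ⟨c, h₁, z', hz', h₂⟩
  · rintro (⟨c, ⟨x', hx', h₁⟩, h₂⟩ | ⟨c, h₁, z', hz', h₂⟩)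
    · exact ⟨_, Or.inl ⟨x', hx', rfl⟩, mem_pPos_sumGraph_iff.2 ⟨c, h₁, h₂⟩⟩
    · exact ⟨_, Or.inr ⟨z', hz', rfl⟩, mem_pPos_sumGraph_iff.2 ⟨c, h₁, h₂⟩⟩

theorem HasGVal.mem_nPos_sumGraph_iff (hx : HasGVal Γ x a) :
    (x, z) ∈ NPos (sumGraph Γ Ξ) ↔ (∃ d ≠ a, HasGVal Ξ z d) ∨ a ∈ ValSet Ξ z := by
  rw [_root_.mem_nPos_sumGraph_iff]
  constructor
  · rintro (⟨c, ⟨x', hx', hc⟩, hz⟩ | ⟨c, hc, hcz⟩)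
    · exact Or.inl ⟨c, fun hca => hx.not_hasGVal_of_mem hx' (hca ▸ hc), hz⟩
    · exact Or.inr (hc.unique hx ▸ hcz)
  · rintro (⟨d, hda, hd⟩ | ha)
    · rcases hda.lt_or_gt with hlt | hlt
      · exact Or.inl ⟨d, hx.exists_mem_of_lt hlt, hd⟩
      · exact Or.inr ⟨a, hx, hd.exists_mem_of_lt hlt⟩
    · exact Or.inr ⟨a, hx, ha⟩

theorem InfiniteRank.not_mem_pPos_sumGraph (hx : InfiniteRank Γ x) :
    (x, z) ∉ PPos (sumGraph Γ Ξ) := fun h =>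
  let ⟨_, hc, _⟩ := mem_pPos_sumGraph_iff.1 h
  hc.not_infiniteRank hx

theorem InfiniteRank.mem_nPos_sumGraph_iff (hx : InfiniteRank Γ x) :
    (x, z) ∈ NPos (sumGraph Γ Ξ) ↔ ∃ c ∈ ValSet Γ x, HasGVal Ξ z c := by
  rw [_root_.mem_nPos_sumGraph_iff, or_iff_left]
  rintro ⟨c, hc, -⟩
  exact hc.not_infiniteRank hx

theorem sameOutcome_of_iff (hP : x ∈ PPos Γ ↔ y ∈ PPos Δ)
    (hN : x ∈ NPos Γ ↔ y ∈ NPos Δ) :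
    SameOutcome Γ x Δ y :=
  ⟨hP, hN, by simp only [DPos, Set.mem_compl_iff, Set.mem_union, hP, hN]⟩

theorem gameEquiv_of_hasGVal (hx : HasGVal Γ x a) (hy : HasGVal Δ y a) :
    GameEquiv Γ x Δ y := by
  intro X Ξ z
  have hxy : ∀ c, HasGVal Γ x c ↔ HasGVal Δ y c := fun c =>
    ⟨fun hc => hx.unique hc ▸ hy, fun hc => hy.unique hc ▸ hx⟩
  refine sameOutcome_of_iff ?_ ?_
  · simp only [mem_pPos_sumGraph_iff, hxy]
  · rw [hx.mem_nPos_sumGraph_iff, hy.mem_nPos_sumGraph_iff]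

theorem gameEquiv_of_infiniteRank (hx : InfiniteRank Γ x) (hy : InfiniteRank Δ y)
    (h : ValSet Γ x = ValSet Δ y) : GameEquiv Γ x Δ y := fun _ _ _ =>
  sameOutcome_of_iff (iff_of_false hx.not_mem_pPos_sumGraph hy.not_mem_pPos_sumGraph)
    (by rw [hx.mem_nPos_sumGraph_iff, hy.mem_nPos_sumGraph_iff, h])

end Equivalence

/-- The positions `some j` form the nim heap `*k`; the looping position `none` has as options
itself and the heaps `*j` with `j ∈ A`, so its value is `∞(A ∩ [0, k])`. -/
noncomputable def loopyNimGraph (k : ℕ) (A : Set ℕ) :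
    Option (Fin (k + 1)) → Finset (Option (Fin (k + 1)))
  | some j => (nimGraph k j).map .some
  | none => insert none ((Finset.univ.filter fun i : Fin (k + 1) => (i : ℕ) ∈ A).map .some)

section LoopyNim

variable {k : ℕ} {A : Set ℕ}

theorem hasGVal_loopyNimGraph_some (j : Fin (k + 1)) : HasGVal (loopyNimGraph k A) (some j) j := by
  obtain ⟨j, hj⟩ := j
  induction j using Nat.strong_induction_on with
  | _ j ih =>
  refine hasGVal_of_forall_mem (fun y hy => ?_) fun c hc => ?_
  · obtain ⟨i, hi, rfl⟩ : ∃ i : Fin (k + 1), i < ⟨j, hj⟩ ∧ some i = y := by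
      simpa [loopyNimGraph, nimGraph] using hy
    exact Or.inl ⟨i, Fin.val_ne_of_ne hi.ne, ih i hi i.2⟩
  · exact ⟨some ⟨c, by omega⟩, by simpa [loopyNimGraph, nimGraph] using hc, ih c hc _⟩

theorem infiniteRank_loopyNimGraph_none : InfiniteRank (loopyNimGraph k A) none :=
  infiniteRank_of_mem_self (by simp [loopyNimGraph])

theorem valSet_loopyNimGraph_none : ValSet (loopyNimGraph k A) none = A ∩ Set.Iic k := by
  ext a
  simp only [ValSet, loopyNimGraph, Finset.mem_insert, Finset.mem_map, Finset.mem_filter,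
    Finset.mem_univ, true_and]
  constructor
  · rintro ⟨y, rfl | ⟨i, hi, rfl⟩, ha⟩
    · exact absurd infiniteRank_loopyNimGraph_none ha.not_infiniteRank
    · obtain rfl := ha.unique (hasGVal_loopyNimGraph_some i)
      exact ⟨hi, Nat.lt_succ_iff.1 i.2⟩
  · rintro ⟨haA, hak⟩
    exact ⟨_, Or.inr ⟨⟨a, Nat.lt_succ_of_le hak⟩, haA, rfl⟩,
      hasGVal_loopyNimGraph_some _⟩

end LoopyNim

/-- every locally finite game is equivalent to some finite game. -/
theorem stmt7 {V : Type*} (Γ : V → Finset V) (x : V) :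
    ∃ (W : Type) (_ : Finite W) (Δ : W → Finset W) (y : W), GameEquiv Γ x Δ y := by
  rcases hasGVal_or_infiniteRank Γ x with ⟨a, ha⟩ | hx
  · refine ⟨_, inferInstance, loopyNimGraph a ∅, some (Fin.last a),
      gameEquiv_of_hasGVal ha ?_⟩
    simpa using hasGVal_loopyNimGraph_some (A := ∅) (Fin.last a)
  · obtain ⟨k, hk⟩ := (valSet_finite Γ x).bddAbove
    refine ⟨_, inferInstance, loopyNimGraph k (ValSet Γ x), none,
      gameEquiv_of_infiniteRank hx infiniteRank_loopyNimGraph_none ?_⟩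
    rw [valSet_loopyNimGraph_none]
    exact (Set.inter_eq_left.2 fun _ h => hk h).symm
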